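/- arXiv:1910.07512 — 7 statements merged into one kernel-verified Lean document; each statement's English description precedes it below -/
import Mathlib

section
/- Let Hxx, Hxy, Hyx, Hyy be real matrix blocks of sizes n×n, n×m, m×n, m×m respectively with Hyx = Hxyᵀ, Hxx and Hyy symmetric, Hyy invertible, and let c > 0, η > 0. Define P = [[I, 0], [−Hyy⁻¹Hyx, I]] and Q = [[Hxx, Hxy], [−c·Hyx, −c·Hyy]]. Then the matrix J = I − η·P·Q is similar (via conjugation by [[I, 0], [Hyy⁻¹Hyx, I]]) to the block upper triangular matrix I − η·[[Hxx − Hxy·Hyy⁻¹·Hyx, Hxy], [0, −c·Hyy]]. -/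
open Matrix

/-!
The conjugator `S = [[I, 0], [Hyy⁻¹Hyx, I]]` is the inverse of the preconditioner `P`, so
`S (I − η P Q) S⁻¹ = I − η Q P`, and right multiplication by the block unitriangular `P`
clears the lower-left block `−c Hyx + c Hyy Hyy⁻¹ Hyx = 0` of `Q`.
-/

section BlockUnitriangular

variable {l m R : Type*} [Fintype l] [Fintype m] [DecidableEq l] [DecidableEq m] [Ring R]

theorem fromBlocks_one_zero_mul_fromBlocks_one_zero_neg (A : Matrix m l R) :
    fromBlocks (1 : Matrix l l R) 0 A (1 : Matrix m m R) * fromBlocks 1 0 (-A) 1 = 1 := by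
  simp [fromBlocks_multiply, ← fromBlocks_one]

theorem fromBlocks_mul_fromBlocks_one_zero_neg (A : Matrix l l R) (B : Matrix l m R)
    (C : Matrix m l R) (D : Matrix m m R) (E : Matrix m l R) :
    fromBlocks A B C D * fromBlocks 1 0 (-E) 1 = fromBlocks (A - B * E) B (C - D * E) D := by
  simp [fromBlocks_multiply, sub_eq_add_neg]

end BlockUnitriangular

theorem mul_one_sub_smul_mul_mul_of_mul_eq_one {R A : Type*} [CommSemiring R] [Ring A]
    [Algebra R A] {S P : A} (hSP : S * P = 1) (r : R) (Q : A) :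
    S * (1 - r • (P * Q)) * P = 1 - r • (Q * P) := by
  rw [mul_sub, sub_mul, mul_one, hSP, mul_smul_comm, smul_mul_assoc, ← mul_assoc S P,
    hSP, one_mul]

theorem fr_jacobian_similar_blockTriangular_general {n m : ℕ}
    (Hxx : Matrix (Fin n) (Fin n) ℝ) (Hxy : Matrix (Fin n) (Fin m) ℝ)
    (Hyx : Matrix (Fin m) (Fin n) ℝ) (Hyy : Matrix (Fin m) (Fin m) ℝ)
    (hinv : IsUnit Hyy)
    (c η : ℝ) :
    let P : Matrix (Fin n ⊕ Fin m) (Fin n ⊕ Fin m) ℝ :=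
      fromBlocks 1 0 (-(Hyy⁻¹ * Hyx)) 1
    let Q : Matrix (Fin n ⊕ Fin m) (Fin n ⊕ Fin m) ℝ :=
      fromBlocks Hxx Hxy (-(c • Hyx)) (-(c • Hyy))
    let J : Matrix (Fin n ⊕ Fin m) (Fin n ⊕ Fin m) ℝ := 1 - η • (P * Q)
    let S : Matrix (Fin n ⊕ Fin m) (Fin n ⊕ Fin m) ℝ :=
      fromBlocks 1 0 (Hyy⁻¹ * Hyx) 1
    IsUnit S ∧
      S * J * S⁻¹ =
        1 - η • fromBlocks (Hxx - Hxy * Hyy⁻¹ * Hyx) Hxy 0 (-(c • Hyy)) := by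
  intro P Q J S
  have hSP : S * P = 1 := fromBlocks_one_zero_mul_fromBlocks_one_zero_neg _
  have hPS : P * S = 1 := by
    simpa using fromBlocks_one_zero_mul_fromBlocks_one_zero_neg (-(Hyy⁻¹ * Hyx))
  have hQP : Q * P = fromBlocks (Hxx - Hxy * Hyy⁻¹ * Hyx) Hxy 0 (-(c • Hyy)) := by
    have hHyy : Hyy * (Hyy⁻¹ * Hyx) = Hyx := by
      rw [← Matrix.mul_assoc, mul_nonsing_inv _ ((isUnit_iff_isUnit_det _).mp hinv), Matrix.one_mul]
    rw [fromBlocks_mul_fromBlocks_one_zero_neg, Matrix.neg_mul, Matrix.smul_mul, hHyy, sub_neg_eq_add,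
      neg_add_cancel, Matrix.mul_assoc]
  refine ⟨⟨⟨S, P, hSP, hPS⟩, rfl⟩, ?_⟩
  rw [inv_eq_right_inv hSP, mul_one_sub_smul_mul_mul_of_mul_eq_one hSP, hQP]

/-- The Follow-the-Ridge Jacobian `J = I − η P Q`, with
`P = [[I, 0], [−Hyy⁻¹Hyx, I]]` and `Q = [[Hxx, Hxy], [−c Hyx, −c Hyy]]`, is similar
via conjugation by `S = [[I, 0], [Hyy⁻¹Hyx, I]]` to the block upper triangular matrix
`I − η [[Hxx − Hxy Hyy⁻¹ Hyx, Hxy], [0, −c Hyy]]`. -/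
theorem fr_jacobian_similar_blockTriangular {n m : ℕ}
    (Hxx : Matrix (Fin n) (Fin n) ℝ) (Hxy : Matrix (Fin n) (Fin m) ℝ)
    (Hyx : Matrix (Fin m) (Fin n) ℝ) (Hyy : Matrix (Fin m) (Fin m) ℝ)
    (hyx : Hyx = Hxyᵀ) (hxx : Hxxᵀ = Hxx) (hyy : Hyyᵀ = Hyy) (hinv : IsUnit Hyy)
    (c η : ℝ) (hc : 0 < c) (hη : 0 < η) :
    let P : Matrix (Fin n ⊕ Fin m) (Fin n ⊕ Fin m) ℝ :=
      fromBlocks 1 0 (-(Hyy⁻¹ * Hyx)) 1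
    let Q : Matrix (Fin n ⊕ Fin m) (Fin n ⊕ Fin m) ℝ :=
      fromBlocks Hxx Hxy (-(c • Hyx)) (-(c • Hyy))
    let J : Matrix (Fin n ⊕ Fin m) (Fin n ⊕ Fin m) ℝ := 1 - η • (P * Q)
    let S : Matrix (Fin n ⊕ Fin m) (Fin n ⊕ Fin m) ℝ :=
      fromBlocks 1 0 (Hyy⁻¹ * Hyx) 1
    IsUnit S ∧
      S * J * S⁻¹ =
        1 - η • fromBlocks (Hxx - Hxy * Hyy⁻¹ * Hyx) Hxy 0 (-(c • Hyy)) :=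
  fr_jacobian_similar_blockTriangular_general Hxx Hxy Hyx Hyy hinv c η
end

section
/- Under the setup of the previous similarity (Hyx = Hxyᵀ, Hxx, Hyy symmetric, Hyy invertible, c, η > 0), all eigenvalues of J = I − η·[[I,0],[−Hyy⁻¹Hyx, I]]·[[Hxx, Hxy],[−c·Hyx, −c·Hyy]] are real, and they are exactly the eigenvalues of I − η(Hxx − Hxy·Hyy⁻¹·Hyx) together with the eigenvalues of I + cη·Hyy. -/
/-!
Conjugating by the unipotent block matrix `L = [[I, 0], [-Hyy⁻¹Hyx, I]]` turns `J = I - η L M` into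
`I - η M L`, and `M L` is block upper triangular with diagonal blocks the Schur complement
`Hxx - Hxy Hyy⁻¹ Hyx` and `-c Hyy`. So the characteristic polynomial of `J` factors into those of
two real symmetric matrices, whose complex eigenvalues are real.
-/

open Matrix Polynomial

namespace Matrix

section Blocks

variable {R n m : Type*} [CommRing R] [Fintype m] [DecidableEq m]

theorem IsSymm.sub_mul_nonsing_inv_mul_transpose {A : Matrix n n R} {B : Matrix n m R}
    {D : Matrix m m R} (hA : A.IsSymm) (hD : D.IsSymm) : (A - B * D⁻¹ * Bᵀ).IsSymm := by
  refine hA.sub ?_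
  rw [IsSymm, transpose_mul, transpose_mul, transpose_nonsing_inv, hD.eq, transpose_transpose,
    Matrix.mul_assoc]

variable [Fintype n] [DecidableEq n]

theorem charpoly_one_sub_smul_mul_comm_of_mul_eq_one {L L' : Matrix n n R} (h : L * L' = 1)
    (M : Matrix n n R) (η : R) : (1 - η • (L * M)).charpoly = (1 - η • (M * L)).charpoly := by
  have hconj : 1 - η • (L * M) = L * (1 - η • (M * L)) * L' := by
    rw [mul_sub, sub_mul, mul_one, h, mul_smul_comm, smul_mul, ← Matrix.mul_assoc,
      Matrix.mul_assoc (L * M), h, Matrix.mul_one]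
  rw [hconj, charpoly_mul_comm, ← Matrix.mul_assoc, mul_eq_one_comm.mp h, Matrix.one_mul]

theorem fromBlocks_mul_fromBlocks_one_zero_neg_one (A : Matrix n n R) (B : Matrix n m R)
    {C : Matrix m n R} {D : Matrix m m R} {K : Matrix m n R} (hK : D * K = C) :
    fromBlocks A B C D * fromBlocks 1 0 (-K) 1 = fromBlocks (A - B * K) B 0 D := by
  simp [fromBlocks_multiply, hK, sub_eq_add_neg]

theorem fromBlocks_one_zero_neg_one_mul_fromBlocks_one_zero_one (K : Matrix m n R) :
    fromBlocks 1 0 (-K) 1 * fromBlocks 1 0 K 1 = (1 : Matrix (n ⊕ m) (n ⊕ m) R) := by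
  simp [fromBlocks_multiply, ← fromBlocks_one]

theorem charpoly_one_sub_smul_fromBlocks_zero₂₁ (A : Matrix n n R) (B : Matrix n m R)
    (D : Matrix m m R) (η : R) :
    (1 - η • fromBlocks A B 0 D).charpoly = (1 - η • A).charpoly * (1 - η • D).charpoly := by
  rw [← fromBlocks_one, fromBlocks_smul, sub_eq_add_neg, fromBlocks_neg, fromBlocks_add]
  simp only [smul_zero, neg_zero, add_zero, ← sub_eq_add_neg]
  exact charpoly_fromBlocks_zero₂₁ _ _ _

end Blocks

theorem IsSymm.im_eq_zero_of_isRoot_charpoly_map {ι : Type*} [Fintype ι] [DecidableEq ι]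
    {B : Matrix ι ι ℝ} (hB : B.IsSymm) {μ : ℂ} (h : (B.charpoly.map (algebraMap ℝ ℂ)).IsRoot μ) :
    μ.im = 0 := by
  have hherm : (B.map (algebraMap ℝ ℂ)).IsHermitian :=
    (isHermitian_iff_isSymm.mpr hB).map _ fun x => (Complex.conj_ofReal x).symm
  rw [← charpoly_map, ← mem_spectrum_iff_isRoot_charpoly, hherm.spectrum_eq_image_range] at h
  obtain ⟨_, -, rfl⟩ := h
  simp

end Matrix

theorem fr_jacobian_eigenvalues_real_general {n m : ℕ}
    (Hxx : Matrix (Fin n) (Fin n) ℝ) (Hxy : Matrix (Fin n) (Fin m) ℝ)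
    (Hyx : Matrix (Fin m) (Fin n) ℝ) (Hyy : Matrix (Fin m) (Fin m) ℝ)
    (hyx : Hyx = Hxyᵀ) (hxx : Hxxᵀ = Hxx) (hyy : Hyyᵀ = Hyy) (hinv : IsUnit Hyy)
    (c η : ℝ) :
    let J : Matrix (Fin n ⊕ Fin m) (Fin n ⊕ Fin m) ℝ :=
      1 - η • (fromBlocks 1 0 (-(Hyy⁻¹ * Hyx)) 1 *
        fromBlocks Hxx Hxy (-(c • Hyx)) (-(c • Hyy)))
    J.charpoly =
        ((1 : Matrix (Fin n) (Fin n) ℝ) - η • (Hxx - Hxy * Hyy⁻¹ * Hyx)).charpoly *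
          ((1 : Matrix (Fin m) (Fin m) ℝ) + (c * η) • Hyy).charpoly ∧
      ∀ μ ∈ spectrum ℂ (J.map (algebraMap ℝ ℂ)), μ.im = 0 := by
  intro J
  have hK : -(c • Hyy) * (Hyy⁻¹ * Hyx) = -(c • Hyx) := by
    rw [Matrix.neg_mul, Matrix.smul_mul, ← Matrix.mul_assoc,
      mul_nonsing_inv _ ((isUnit_iff_isUnit_det _).mp hinv), Matrix.one_mul]
  have hfactor : J.charpoly =
      ((1 : Matrix (Fin n) (Fin n) ℝ) - η • (Hxx - Hxy * Hyy⁻¹ * Hyx)).charpoly *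
        ((1 : Matrix (Fin m) (Fin m) ℝ) + (c * η) • Hyy).charpoly := by
    rw [charpoly_one_sub_smul_mul_comm_of_mul_eq_one
        (fromBlocks_one_zero_neg_one_mul_fromBlocks_one_zero_one _),
      fromBlocks_mul_fromBlocks_one_zero_neg_one _ _ hK, charpoly_one_sub_smul_fromBlocks_zero₂₁,
      Matrix.mul_assoc, smul_neg, sub_neg_eq_add, smul_smul, mul_comm η c]
  refine ⟨hfactor, fun μ hμ => ?_⟩
  have hschur : (1 - η • (Hxx - Hxy * Hyy⁻¹ * Hyx)).IsSymm :=
    isSymm_one.sub ((hyx ▸ IsSymm.sub_mul_nonsing_inv_mul_transpose hxx hyy).smul η)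
  have hshift : (1 + (c * η) • Hyy).IsSymm := isSymm_one.add (IsSymm.smul hyy _)
  rw [mem_spectrum_iff_isRoot_charpoly, charpoly_map, hfactor, Polynomial.map_mul, IsRoot.def,
    eval_mul, mul_eq_zero] at hμ
  exact hμ.elim hschur.im_eq_zero_of_isRoot_charpoly_map hshift.im_eq_zero_of_isRoot_charpoly_map

/-- All eigenvalues of the Follow-the-Ridge Jacobian `J` are real, and they are exactly
the eigenvalues of `I − η(Hxx − Hxy Hyy⁻¹ Hyx)` together with those of `I + cη Hyy`:
`J.charpoly` factors accordingly, and all complex roots of `J.charpoly` are real. -/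
theorem fr_jacobian_eigenvalues_real {n m : ℕ}
    (Hxx : Matrix (Fin n) (Fin n) ℝ) (Hxy : Matrix (Fin n) (Fin m) ℝ)
    (Hyx : Matrix (Fin m) (Fin n) ℝ) (Hyy : Matrix (Fin m) (Fin m) ℝ)
    (hyx : Hyx = Hxyᵀ) (hxx : Hxxᵀ = Hxx) (hyy : Hyyᵀ = Hyy) (hinv : IsUnit Hyy)
    (c η : ℝ) (hc : 0 < c) (hη : 0 < η) :
    let J : Matrix (Fin n ⊕ Fin m) (Fin n ⊕ Fin m) ℝ :=
      1 - η • (fromBlocks 1 0 (-(Hyy⁻¹ * Hyx)) 1 *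
        fromBlocks Hxx Hxy (-(c • Hyx)) (-(c • Hyy)))
    J.charpoly =
        ((1 : Matrix (Fin n) (Fin n) ℝ) - η • (Hxx - Hxy * Hyy⁻¹ * Hyx)).charpoly *
          ((1 : Matrix (Fin m) (Fin m) ℝ) + (c * η) • Hyy).charpoly ∧
      ∀ μ ∈ spectrum ℂ (J.map (algebraMap ℝ ℂ)), μ.im = 0 :=
  fr_jacobian_eigenvalues_real_general Hxx Hxy Hyx Hyy hyx hxx hyy hinv c η
end

section
/- Suppose Hyy ⪯ 0 (negative semidefinite), Hxx − Hxy·Hyy⁻¹·Hyx ⪰ 0, Hyy invertible, and 0 < η < 2/max{ρ(Hxx − Hxy·Hyy⁻¹·Hyx), c·ρ(−Hyy)} with c > 0. Then the spectral radius of the Follow-the-Ridge Jacobian J = I − η[[I,0],[−Hyy⁻¹Hyx, I]][[Hxx, Hxy],[−c·Hyx, −c·Hyy]] satisfies ρ(J) ≤ 1. -/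
/-!
Writing `J = 1 - η • (L * H)` with `L` the unit lower-triangular preconditioner, every
eigenvalue of `J` is `1 - η ν` for an eigenvalue `ν` of `L * H`. Since `L * H` and `H * L` have
the same characteristic polynomial, and `H * L` is block upper-triangular with diagonal blocks the
Schur complement `Hxx - Hxy Hyy⁻¹ Hyx` and `-c Hyy`, both positive semidefinite, `ν` is a real
number in `[0, max (ρ(Hxx - Hxy Hyy⁻¹ Hyx)) (c ρ(-Hyy))]`; the step-size bound then puts
`1 - η ν` in `[-1, 1]`.
-/

open Matrix

/-- The spectral radius of a real square matrix: the supremum of the moduli of its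
complex eigenvalues. -/
noncomputable def specRad {k : ℕ} (M : Matrix (Fin k) (Fin k) ℝ) : ℝ :=
  sSup ((fun z : ℂ => ‖z‖) '' spectrum ℂ (M.map (algebraMap ℝ ℂ)))

open scoped Pointwise ComplexOrder

theorem spectrum.exists_eq_one_sub_mul_of_mem_one_sub_smul {𝕜 A : Type*} [Field 𝕜] [Ring A]
    [Algebra 𝕜 A] {a : A} {η μ : 𝕜} (hη : η ≠ 0) (hμ : μ ∈ spectrum 𝕜 (1 - η • a)) :
    ∃ ν ∈ spectrum 𝕜 a, μ = 1 - η * ν := by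
  rw [← map_one (algebraMap 𝕜 A), ← spectrum.singleton_sub_eq, ← Units.val_mk0 hη,
    ← Units.smul_def, spectrum.unit_smul_eq_smul] at hμ
  obtain ⟨_, rfl, _, ⟨ν, hν, rfl⟩, rfl⟩ := hμ
  exact ⟨ν, hν, rfl⟩

namespace Matrix

variable {ι K L : Type*} [Fintype ι] [DecidableEq ι] [Field K] [Field L] [Algebra K L]

theorem mem_spectrum_map_algebraMap_iff (M : Matrix ι ι K) (μ : L) :
    μ ∈ spectrum L (M.map (algebraMap K L)) ↔ (M.charpoly.map (algebraMap K L)).IsRoot μ := by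
  rw [mem_spectrum_iff_isRoot_charpoly, charpoly_map]

theorem spectrum_map_algebraMap_mul_comm (A B : Matrix ι ι K) :
    spectrum L ((A * B).map (algebraMap K L)) = spectrum L ((B * A).map (algebraMap K L)) := by
  ext μ
  rw [mem_spectrum_map_algebraMap_iff, mem_spectrum_map_algebraMap_iff, charpoly_mul_comm]

theorem spectrum_map_algebraMap_fromBlocks_zero₂₁ {κ : Type*} [Fintype κ] [DecidableEq κ]
    (A : Matrix ι ι K) (B : Matrix ι κ K) (D : Matrix κ κ K) :
    spectrum L ((fromBlocks A B 0 D).map (algebraMap K L)) =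
      spectrum L (A.map (algebraMap K L)) ∪ spectrum L (D.map (algebraMap K L)) := by
  ext μ
  simp only [Set.mem_union, mem_spectrum_map_algebraMap_iff, charpoly_fromBlocks_zero₂₁,
    Polynomial.map_mul, Polynomial.root_mul]

theorem spectrum_map_algebraMap_smul (M : Matrix ι ι K) {c : K} (hc : c ≠ 0) :
    spectrum L ((c • M).map (algebraMap K L)) =
      algebraMap K L c • spectrum L (M.map (algebraMap K L)) := by
  rw [map_smul' _ _ _ (map_mul _), ← Units.val_mk0 ((map_ne_zero (algebraMap K L)).mpr hc),
    ← Units.smul_def, spectrum.unit_smul_eq_smul]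
  rfl

theorem fromBlocks_mul_fromBlocks_eq_schur {n m R : Type*} [Fintype n] [Fintype m]
    [DecidableEq n] [DecidableEq m] [CommRing R] (A : Matrix n n R) (B : Matrix n m R)
    (C : Matrix m n R) (D : Matrix m m R) (c : R) (hD : IsUnit D) :
    fromBlocks A B (-(c • C)) (-(c • D)) * fromBlocks 1 0 (-(D⁻¹ * C)) 1 =
      fromBlocks (A - B * D⁻¹ * C) B 0 (-(c • D)) := by
  have hDC : D * (D⁻¹ * C) = C := mul_nonsing_inv_cancel_left _ _ ((isUnit_iff_isUnit_det D).mp hD)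
  simp [fromBlocks_multiply, Matrix.mul_assoc, hDC, sub_eq_add_neg]

end Matrix

theorem Matrix.PosSemidef.map_algebraMap {ι 𝕜 : Type*} [Fintype ι] [RCLike 𝕜]
    {M : Matrix ι ι ℝ} (hM : M.PosSemidef) : (M.map (algebraMap ℝ 𝕜)).PosSemidef := by
  classical
  obtain ⟨B, rfl⟩ : ∃ B : Matrix ι ι ℝ, M = Bᴴ * B := by
    open scoped MatrixOrder in
    exact CStarAlgebra.nonneg_iff_eq_star_mul_self.mp hM.nonneg
  rw [Matrix.map_mul, conjTranspose_map _ fun _ => (RCLike.conj_ofReal _).symm]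
  exact posSemidef_conjTranspose_mul_self _

theorem norm_le_specRad {k : ℕ} {M : Matrix (Fin k) (Fin k) ℝ} {μ : ℂ}
    (hμ : μ ∈ spectrum ℂ (M.map (algebraMap ℝ ℂ))) : ‖μ‖ ≤ specRad M :=
  le_csSup ((Matrix.finite_spectrum _).image _).bddAbove ⟨μ, hμ, rfl⟩

theorem Matrix.PosSemidef.exists_eq_ofReal_of_mem_spectrum {k : ℕ} {M : Matrix (Fin k) (Fin k) ℝ}
    (hM : M.PosSemidef) {μ : ℂ} (hμ : μ ∈ spectrum ℂ (M.map (algebraMap ℝ ℂ))) :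
    ∃ r : ℝ, 0 ≤ r ∧ r ≤ specRad M ∧ μ = r := by
  obtain ⟨r, hr, rfl⟩ := RCLike.nonneg_iff_exists_ofReal.mp
    ((posSemidef_iff_isHermitian_and_spectrum_nonneg.mp hM.map_algebraMap).2 hμ)
  refine ⟨r, hr, ?_, rfl⟩
  simpa [abs_of_nonneg hr] using norm_le_specRad hμ

theorem abs_one_sub_mul_le_one {η t M : ℝ} (hη : 0 < η) (ht : 0 ≤ t) (htM : t ≤ M)
    (hηM : η < 2 / M) : |1 - η * t| ≤ 1 := by
  have hM : 0 < M := by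
    by_contra! h
    exact (div_nonpos_of_nonneg_of_nonpos zero_le_two h).not_gt (hη.trans hηM)
  have : η * t < 2 := by
    calc η * t ≤ η * M := by gcongr
      _ < 2 := (lt_div_iff₀ hM).mp hηM
  rw [abs_le]
  constructor <;> nlinarith

theorem fr_jacobian_spectral_radius_le_one_general {n m : ℕ}
    (Hxx : Matrix (Fin n) (Fin n) ℝ) (Hxy : Matrix (Fin n) (Fin m) ℝ)
    (Hyx : Matrix (Fin m) (Fin n) ℝ) (Hyy : Matrix (Fin m) (Fin m) ℝ)
    (hinv : IsUnit Hyy)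
    (hyyNeg : (-Hyy).PosSemidef) (hschur : (Hxx - Hxy * Hyy⁻¹ * Hyx).PosSemidef)
    (c η : ℝ) (hc : 0 < c) (hη : 0 < η)
    (hη2 : η < 2 / max (specRad (Hxx - Hxy * Hyy⁻¹ * Hyx)) (c * specRad (-Hyy))) :
    ∀ μ ∈ spectrum ℂ
      ((1 - η • (fromBlocks (1 : Matrix (Fin n) (Fin n) ℝ) 0 (-(Hyy⁻¹ * Hyx)) 1 *
          fromBlocks Hxx Hxy (-(c • Hyx)) (-(c • Hyy)))).map (algebraMap ℝ ℂ)),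
      ‖μ‖ ≤ 1 := by
  intro μ hμ
  rw [Matrix.map_sub _ (map_sub _), Matrix.map_one _ (map_zero _) (map_one _),
    map_smul' _ _ _ (map_mul _)] at hμ
  obtain ⟨ν, hν, rfl⟩ :=
    spectrum.exists_eq_one_sub_mul_of_mem_one_sub_smul (by simpa using hη.ne') hμ
  rw [spectrum_map_algebraMap_mul_comm, fromBlocks_mul_fromBlocks_eq_schur _ _ _ _ _ hinv,
    spectrum_map_algebraMap_fromBlocks_zero₂₁, ← smul_neg,
    spectrum_map_algebraMap_smul _ hc.ne'] at hν
  obtain ⟨t, ht0, htM, rfl⟩ : ∃ t : ℝ, 0 ≤ t ∧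
      t ≤ max (specRad (Hxx - Hxy * Hyy⁻¹ * Hyx)) (c * specRad (-Hyy)) ∧ ν = t := by
    rcases hν with hS | ⟨ν, hY, rfl⟩
    · obtain ⟨t, ht0, htS, rfl⟩ := hschur.exists_eq_ofReal_of_mem_spectrum hS
      exact ⟨t, ht0, htS.trans (le_max_left _ _), rfl⟩
    · obtain ⟨r, hr0, hrY, rfl⟩ := hyyNeg.exists_eq_ofReal_of_mem_spectrum hY
      exact ⟨c * r, by positivity, (mul_le_mul_of_nonneg_left hrY hc.le).trans (le_max_right _ _),
        by simp⟩
  simpa [← Complex.ofReal_mul, ← Complex.ofReal_one, ← Complex.ofReal_sub, Complex.norm_real]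
    using abs_one_sub_mul_le_one hη ht0 htM hη2

/-- If `Hyy ⪯ 0`, the Schur complement `Hxx − Hxy Hyy⁻¹ Hyx ⪰ 0`, `Hyy` is invertible,
and `0 < η < 2 / max{ρ(Hxx − Hxy Hyy⁻¹ Hyx), c·ρ(−Hyy)}`, then the spectral radius of
the Follow-the-Ridge Jacobian is at most `1`. -/
theorem fr_jacobian_spectral_radius_le_one {n m : ℕ}
    (Hxx : Matrix (Fin n) (Fin n) ℝ) (Hxy : Matrix (Fin n) (Fin m) ℝ)
    (Hyx : Matrix (Fin m) (Fin n) ℝ) (Hyy : Matrix (Fin m) (Fin m) ℝ)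
    (hyx : Hyx = Hxyᵀ) (hxx : Hxxᵀ = Hxx) (hyy : Hyyᵀ = Hyy) (hinv : IsUnit Hyy)
    (hyyNeg : (-Hyy).PosSemidef) (hschur : (Hxx - Hxy * Hyy⁻¹ * Hyx).PosSemidef)
    (c η : ℝ) (hc : 0 < c) (hη : 0 < η)
    (hη2 : η < 2 / max (specRad (Hxx - Hxy * Hyy⁻¹ * Hyx)) (c * specRad (-Hyy))) :
    ∀ μ ∈ spectrum ℂ
      ((1 - η • (fromBlocks (1 : Matrix (Fin n) (Fin n) ℝ) 0 (-(Hyy⁻¹ * Hyx)) 1 *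
          fromBlocks Hxx Hxy (-(c • Hyx)) (-(c • Hyy)))).map (algebraMap ℝ ℂ)),
      ‖μ‖ ≤ 1 :=
  fr_jacobian_spectral_radius_le_one_general Hxx Hxy Hyx Hyy hinv hyyNeg hschur c η hc hη hη2
end

section
/- Suppose Hyy is symmetric and invertible, Hxx symmetric, Hyx = Hxyᵀ, c > 0, η > 0, and the Follow-the-Ridge Jacobian J = I − η[[I,0],[−Hyy⁻¹Hyx, I]][[Hxx, Hxy],[−c·Hyx, −c·Hyy]] has spectral radius ρ(J) < 1. Then Hyy ≺ 0 and Hxx − Hxy·Hyy⁻¹·Hyx ≻ 0. -/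
open Matrix

/-!
Conjugating by the lower unitriangular matrix `[[I, 0], [Hyy⁻¹ Hyx, I]]` turns the Follow-the-Ridge
Jacobian into the block upper triangular matrix
`[[I - η S, -η Hxy], [0, I - c η (-Hyy)]]`, with `S` the Schur complement. Its real spectrum is
therefore `(1 - η σ(S)) ∪ (1 - c η σ(-Hyy))`. Both `S` and `-Hyy` are symmetric, so their
spectra are real, and every real eigenvalue of `J` lies in `(-1, 1)`; hence `1 - η μ < 1` for every
eigenvalue `μ` of `S` and `1 - c η ν < 1` for every eigenvalue `ν` of `-Hyy`, i.e. both are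
positive definite.
-/

theorem Matrix.mem_spectrum_map_of_mem {ι K L : Type*} [Fintype ι] [DecidableEq ι] [Field K]
    [Field L] (f : K →+* L) {A : Matrix ι ι K} {z : K} (hz : z ∈ spectrum K A) :
    f z ∈ spectrum L (A.map f) := by
  rw [mem_spectrum_iff_isRoot_charpoly] at hz ⊢
  rw [charpoly_map]
  exact hz.map

theorem Matrix.spectrum_fromBlocks_zero₂₁ {m n K : Type*} [Fintype m] [Fintype n]
    [DecidableEq m] [DecidableEq n] [Field K] (A : Matrix m m K) (B : Matrix m n K)
    (D : Matrix n n K) :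
    spectrum K (fromBlocks A B 0 D) = spectrum K A ∪ spectrum K D := by
  ext z
  simp only [Set.mem_union, mem_spectrum_iff_isRoot_charpoly, charpoly_fromBlocks_zero₂₁,
    Polynomial.root_mul]

theorem spectrum.add_mul_mem_algebraMap_add_smul {𝕜 A : Type*} [Field 𝕜] [Ring A] [Algebra 𝕜 A]
    {a : A} {μ : 𝕜} (hμ : μ ∈ spectrum 𝕜 a) (s : 𝕜) {t : 𝕜} (ht : t ≠ 0) :
    s + t * μ ∈ spectrum 𝕜 (algebraMap 𝕜 A s + t • a) := by
  rw [add_comm s, spectrum.add_mem_add_iff]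
  exact spectrum.smul_mem_smul_iff (r := Units.mk0 t ht) |>.mpr hμ

theorem Matrix.IsHermitian.posDef_of_spectrum_one_sub_smul_lt_one {n : Type*} [Fintype n]
    [DecidableEq n] {A : Matrix n n ℝ} (hA : A.IsHermitian) {t : ℝ} (ht : 0 < t)
    (h : ∀ z ∈ spectrum ℝ (1 - t • A), z < 1) : A.PosDef := by
  refine hA.posDef_iff_eigenvalues_pos.mpr fun i => ?_
  have hmem := spectrum.add_mul_mem_algebraMap_add_smul (hA.eigenvalues_mem_spectrum_real i) 1
    (neg_ne_zero.mpr ht.ne')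
  rw [map_one, neg_smul, ← sub_eq_add_neg] at hmem
  nlinarith [h _ hmem]

theorem Matrix.fromBlocks_mul_fromBlocks_neg_inv_mul {m n R : Type*} [Fintype m] [Fintype n]
    [DecidableEq m] [DecidableEq n] [CommRing R] (A : Matrix m m R) (B : Matrix m n R)
    (C : Matrix n m R) {D : Matrix n n R} (hD : IsUnit D) (c : R) :
    fromBlocks A B (c • C) (c • D) * fromBlocks 1 0 (-(D⁻¹ * C)) 1
      = fromBlocks (A - B * D⁻¹ * C) B 0 (c • D) := by
  have hDD : D * D⁻¹ = 1 := mul_nonsing_inv D ((isUnit_iff_isUnit_det D).mp hD)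
  simp only [fromBlocks_multiply, Matrix.mul_one, Matrix.mul_zero, zero_add, Matrix.mul_neg,
    ← Matrix.mul_assoc, ← sub_eq_add_neg, Matrix.smul_mul, hDD, Matrix.one_mul, sub_self]

noncomputable def ftrJacobian {m n K : Type*} [Fintype m] [Fintype n] [DecidableEq m]
    [DecidableEq n] [Field K] (Hxx : Matrix n n K) (Hxy : Matrix n m K) (Hyx : Matrix m n K)
    (Hyy : Matrix m m K) (c η : K) : Matrix (n ⊕ m) (n ⊕ m) K :=
  1 - η • (fromBlocks 1 0 (-(Hyy⁻¹ * Hyx)) 1 * fromBlocks Hxx Hxy (-(c • Hyx)) (-(c • Hyy)))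

theorem spectrum_ftrJacobian {m n K : Type*} [Fintype m] [Fintype n] [DecidableEq m]
    [DecidableEq n] [Field K] (Hxx : Matrix n n K) (Hxy : Matrix n m K) (Hyx : Matrix m n K)
    {Hyy : Matrix m m K} (hHyy : IsUnit Hyy) (c η : K) :
    spectrum K (ftrJacobian Hxx Hxy Hyx Hyy c η)
      = spectrum K (1 - η • (Hxx - Hxy * Hyy⁻¹ * Hyx)) ∪ spectrum K (1 - (c * η) • -Hyy) := by
  set L' : Matrix (n ⊕ m) (n ⊕ m) K := fromBlocks 1 0 (-(Hyy⁻¹ * Hyx)) 1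
  set L : Matrix (n ⊕ m) (n ⊕ m) K := fromBlocks 1 0 (Hyy⁻¹ * Hyx) 1
  have hL'L : L' * L = 1 := by simp [L', L, fromBlocks_multiply]
  have hLL' : L * L' = 1 := by simp [L', L, fromBlocks_multiply]
  set H : Matrix (n ⊕ m) (n ⊕ m) K := fromBlocks Hxx Hxy (-(c • Hyx)) (-(c • Hyy))
  have hHL' : H * L' = fromBlocks (Hxx - Hxy * Hyy⁻¹ * Hyx) Hxy 0 (-(c • Hyy)) := by
    simpa only [H, neg_smul] using fromBlocks_mul_fromBlocks_neg_inv_mul Hxx Hxy Hyx hHyy (-c)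
  let u : (Matrix (n ⊕ m) (n ⊕ m) K)ˣ := ⟨L', L, hL'L, hLL'⟩
  have hconj : ftrJacobian Hxx Hxy Hyx Hyy c η
      = u * (1 - η • (H * L')) * (↑u⁻¹ : Matrix (n ⊕ m) (n ⊕ m) K) := by
    change 1 - η • (L' * H) = L' * (1 - η • (H * L')) * L
    rw [mul_sub, sub_mul, mul_one, hL'L, mul_smul_comm, smul_mul_assoc, ← Matrix.mul_assoc L' H L',
      Matrix.mul_assoc _ L' L, hL'L, Matrix.mul_one]
  have htriangular : 1 - η • (H * L') = fromBlocks (1 - η • (Hxx - Hxy * Hyy⁻¹ * Hyx))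
      (-(η • Hxy)) 0 (1 - (c * η) • -Hyy) := by
    rw [hHL', ← fromBlocks_one, fromBlocks_smul, sub_eq_add_neg, fromBlocks_neg, fromBlocks_add]
    congr 1 <;> module
  rw [hconj, spectrum.units_conjugate, htriangular, spectrum_fromBlocks_zero₂₁]

/-- If the Follow-the-Ridge Jacobian has spectral radius `< 1` (all complex eigenvalues
of modulus `< 1`), with `Hxx`, `Hyy` symmetric, `Hyy` invertible, `Hyx = Hxyᵀ`, `c, η > 0`,
then `Hyy ≺ 0` and the Schur complement `Hxx − Hxy Hyy⁻¹ Hyx ≻ 0`. -/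
theorem fr_strict_stability_implies_local_minimax {n m : ℕ}
    (Hxx : Matrix (Fin n) (Fin n) ℝ) (Hxy : Matrix (Fin n) (Fin m) ℝ)
    (Hyx : Matrix (Fin m) (Fin n) ℝ) (Hyy : Matrix (Fin m) (Fin m) ℝ)
    (hyx : Hyx = Hxyᵀ) (hxx : Hxxᵀ = Hxx) (hyy : Hyyᵀ = Hyy) (hinv : IsUnit Hyy)
    (c η : ℝ) (hc : 0 < c) (hη : 0 < η)
    (hspec : ∀ μ ∈ spectrum ℂ
      ((1 - η • (fromBlocks (1 : Matrix (Fin n) (Fin n) ℝ) 0 (-(Hyy⁻¹ * Hyx)) 1 *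
          fromBlocks Hxx Hxy (-(c • Hyx)) (-(c • Hyy)))).map (algebraMap ℝ ℂ)),
      ‖μ‖ < 1) :
    (-Hyy).PosDef ∧ (Hxx - Hxy * Hyy⁻¹ * Hyx).PosDef := by
  have hreal : ∀ z ∈ spectrum ℝ (ftrJacobian Hxx Hxy Hyx Hyy c η), z < 1 := by
    intro z hz
    have hz' := hspec _ (mem_spectrum_map_of_mem (algebraMap ℝ ℂ) hz)
    rw [Complex.coe_algebraMap, Complex.norm_real, Real.norm_eq_abs] at hz'
    exact lt_of_abs_lt hz'
  rw [spectrum_ftrJacobian Hxx Hxy Hyx hinv] at hreal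
  have hHyy : Hyy.IsHermitian := isHermitian_iff_isSymm.mpr hyy
  have hS : (Hxx - Hxy * Hyy⁻¹ * Hyx).IsHermitian := by
    refine (isHermitian_iff_isSymm.mpr hxx).sub ?_
    simpa [hyx] using isHermitian_mul_mul_conjTranspose Hxy hHyy.inv
  exact ⟨hHyy.neg.posDef_of_spectrum_one_sub_smul_lt_one (mul_pos hc hη)
      fun z hz => hreal z (Or.inr hz),
    hS.posDef_of_spectrum_one_sub_smul_lt_one hη fun z hz => hreal z (Or.inl hz)⟩
end

section
/- For the quadratic function f(x,y) = 3x² + y² + 4xy on ℝ², the point (0,0) is the unique stationary point, and for any learning rate 0 < η < 1, the Jacobian of the gradient descent-ascent update (x,y) ↦ (x − η·∂f/∂x, y + η·∂f/∂y) at (0,0) has both eigenvalues equal to 1 − 2η, hence spectral radius strictly less than 1; yet ∂²f/∂y² = 2 > 0, so (0,0) is not a local maximum of f(0,·). -/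
open Matrix Polynomial Topology

/-!
The GDA Jacobian `I - η [[6, 4], [-4, -2]]` has trace `2 (1 - 2η)` and determinant
`(1 - 2η)²`, so `1 - 2η` is a double eigenvalue, of modulus `< 1` for `0 < η < 1`.
But `f(0, y) = y²` has positive second derivative at `0`; by the second-derivative test
`0` is a local minimum of `f(0, ·)`, and a point that is both a local minimum and a
local maximum has a locally constant neighbourhood, forcing the second derivative to vanish.
-/

theorem Matrix.charpoly_fin_two_eq_X_sub_C_sq {R : Type*} [CommRing R] [Nontrivial R]
    (M : Matrix (Fin 2) (Fin 2) R) (μ : R) (htr : M.trace = 2 * μ) (hdet : M.det = μ ^ 2) :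
    M.charpoly = (X - C μ) ^ 2 := by
  rw [M.charpoly_fin_two, htr, hdet, map_mul, map_pow, map_ofNat]
  ring

theorem not_isLocalMax_of_deriv_deriv_pos {f : ℝ → ℝ} {x₀ : ℝ} (hf : 0 < deriv (deriv f) x₀)
    (hd : deriv f x₀ = 0) (hc : ContinuousAt f x₀) : ¬ IsLocalMax f x₀ := by
  intro hmax
  have hconst : f =ᶠ[𝓝 x₀] fun _ => f x₀ :=
    (hmax.and (isLocalMin_of_deriv_deriv_pos hf hd hc)).mono fun _ h => le_antisymm h.1 h.2
  have hzero : deriv (deriv f) x₀ = 0 := by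
    simpa using hconst.deriv.deriv_eq
  exact hf.ne' hzero

/-- For `f(x,y) = 3x² + y² + 4xy`: `(0,0)` is the unique stationary point; for
`0 < η < 1` the GDA Jacobian `I − η·[[6,4],[−4,−2]]` at `(0,0)` has characteristic
polynomial `(X − (1−2η))²` (both eigenvalues equal `1 − 2η`) and spectral radius
`|1 − 2η| < 1`; yet `(0,0)` is not a local maximum of `f(0,·)`. -/
theorem gda_stable_fixed_point_not_local_minimax (η : ℝ) (hη0 : 0 < η) (hη1 : η < 1) :
    let f : ℝ → ℝ → ℝ := fun x y => 3 * x ^ 2 + y ^ 2 + 4 * x * y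
    (∀ x y : ℝ, (deriv (fun x' => f x' y) x = 0 ∧ deriv (fun y' => f x y') y = 0) ↔
        (x = 0 ∧ y = 0)) ∧
      ((1 : Matrix (Fin 2) (Fin 2) ℝ) - η • !![6, 4; -4, -2]).charpoly =
        (Polynomial.X - Polynomial.C (1 - 2 * η)) ^ 2 ∧
      |1 - 2 * η| < 1 ∧
      ¬ IsLocalMax (fun y => f 0 y) 0 := by
  intro f
  have hfx (x y : ℝ) : deriv (fun x' => f x' y) x = 6 * x + 4 * y := by
    simp (disch := fun_prop) [f]
    ring
  have hfy (x y : ℝ) : deriv (fun y' => f x y') y = 4 * x + 2 * y := by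
    simp (disch := fun_prop) [f]
    ring
  refine ⟨fun x y => ?_, ?_, abs_sub_lt_iff.2 ⟨by linarith, by linarith⟩, ?_⟩
  · rw [hfx, hfy]
    constructor
    · rintro ⟨h₁, h₂⟩
      constructor <;> linarith
    · rintro ⟨rfl, rfl⟩
      norm_num
  · apply charpoly_fin_two_eq_X_sub_C_sq <;> simp [trace_fin_two, det_fin_two] <;> ring
  · apply not_isLocalMax_of_deriv_deriv_pos _ (by simpa using hfy 0 0) (by fun_prop)
    rw [show deriv (fun y => f 0 y) = fun y => 4 * 0 + 2 * y from funext (hfy 0)]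
    simp
end

section
/- For the quadratic function f(x,y) = −3x² − y² + 4xy on ℝ², the point (0,0) is a stationary point satisfying ∂²f/∂y² = −2 < 0 and the Schur complement ∂²f/∂x² − (∂²f/∂x∂y)(∂²f/∂y²)⁻¹(∂²f/∂y∂x) = −6 + 16/2 = 2 > 0 (second-order sufficient conditions for local minimax), yet for every η > 0 the Jacobian I − η·[[−6, 4], [−4, 2]] of gradient descent-ascent at (0,0) has spectral radius strictly greater than 1. -/
/-!
The matrix `H = !![-6, 4; -4, 2]` has trace `-4` and determinant `4`, so its characteristic
polynomial is `(X + 2)²`. By spectral mapping, `1 - η • H` then has the real eigenvalue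
`1 - η * (-2) = 1 + 2η`, which exceeds `1` as soon as `η > 0`.
-/

open Matrix Polynomial

theorem deriv_const_mul_sq (c : ℝ) : deriv (fun x : ℝ => c * x ^ 2) = fun x => 2 * c * x := by
  funext x
  simp only [deriv_const_mul_field', deriv_pow_field]
  ring

theorem spectrum.one_sub_smul_mem {𝕜 A : Type*} [Field 𝕜] [Ring A] [Algebra 𝕜 A] [Nontrivial A]
    {a : A} {r : 𝕜} (hr : r ∈ spectrum 𝕜 a) (η : 𝕜) : 1 - η * r ∈ spectrum 𝕜 (1 - η • a) := by
  rw [← map_one (algebraMap 𝕜 A), ← spectrum.singleton_sub_eq,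
    spectrum.smul_eq_smul η a ⟨r, hr⟩]
  exact Set.sub_mem_sub rfl (Set.smul_mem_smul_set hr)

theorem Matrix.map_mem_spectrum_map {n K S : Type*} [Fintype n] [DecidableEq n] [Field K]
    [CommRing S] [Nontrivial S] (f : K →+* S) {M : Matrix n n K} {r : K}
    (hr : r ∈ spectrum K M) : f r ∈ spectrum S (M.map f) := by
  rw [mem_spectrum_iff_isRoot_charpoly] at hr
  exact mem_spectrum_of_isRoot_charpoly (by rw [charpoly_map]; exact hr.map)

theorem Matrix.mem_spectrum_fin_two_iff {K : Type*} [Field K] (M : Matrix (Fin 2) (Fin 2) K)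
    (r : K) : r ∈ spectrum K M ↔ r ^ 2 - M.trace * r + M.det = 0 := by
  simp [mem_spectrum_iff_isRoot_charpoly, charpoly_fin_two]

/-- For `f(x,y) = −3x² − y² + 4xy`: `(0,0)` is a stationary point satisfying the
second-order sufficient conditions for local minimax (`∂²f/∂y² = −2 < 0` and Schur
complement `−6 − 4·(−2)⁻¹·4 = 2 > 0`), yet for every `η > 0` the GDA Jacobian
`I − η·[[−6,4],[−4,2]]` has an eigenvalue of modulus strictly greater than `1`. -/
theorem gda_fails_on_local_minimax :
    let f : ℝ → ℝ → ℝ := fun x y => -3 * x ^ 2 - y ^ 2 + 4 * x * y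
    (deriv (fun x' => f x' 0) 0 = 0 ∧ deriv (fun y' => f 0 y') 0 = 0) ∧
      deriv (deriv (fun y' => f 0 y')) 0 = -2 ∧ (-2 : ℝ) < 0 ∧
      ((-6 : ℝ) - 4 * (-2 : ℝ)⁻¹ * 4 = 2) ∧ (0 : ℝ) < 2 ∧
      ∀ η : ℝ, 0 < η →
        ∃ μ ∈ spectrum ℂ
          (((1 : Matrix (Fin 2) (Fin 2) ℝ) - η • !![-6, 4; -4, 2]).map (algebraMap ℝ ℂ)),
          1 < ‖μ‖ := by
  intro f
  have hfx : (fun x => f x 0) = fun x => -3 * x ^ 2 := by funext x; simp [f]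
  have hfy : (fun y => f 0 y) = fun y => -1 * y ^ 2 := by funext y; simp [f]
  refine ⟨⟨?_, ?_⟩, ?_, by norm_num, by norm_num, by norm_num, fun η hη => ?_⟩
  · rw [hfx, deriv_const_mul_sq]; ring
  · rw [hfy, deriv_const_mul_sq]; ring
  · rw [hfy, deriv_const_mul_sq, deriv_const_mul_field', deriv_id'']
    norm_num
  · have hH : (-2 : ℝ) ∈ spectrum ℝ (!![-6, 4; -4, 2] : Matrix (Fin 2) (Fin 2) ℝ) := by
      rw [mem_spectrum_fin_two_iff, trace_fin_two_of, det_fin_two_of]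
      norm_num
    refine ⟨_, map_mem_spectrum_map (algebraMap ℝ ℂ) (spectrum.one_sub_smul_mem hH η), ?_⟩
    rw [Complex.coe_algebraMap, Complex.norm_real, Real.norm_of_nonneg (by linarith)]
    linarith
end

section
/- Let J₁ be an n×n real symmetric matrix whose eigenvalues all lie in [0, 1 − 1/(2κ²)] for some κ ≥ 2, and set γ = 1 + 1/(2κ²) − √2/κ. Then every eigenvalue λ of J₂ = [[γI + J₁, −γI], [I, 0]] satisfies |λ| = √γ ≤ 1 − 1/(2√2·κ). -/
/-!
An eigenvector `(z, w)` of `J₂` for `λ` has `z = λ w`, and the first block row then says that `w`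
is an eigenvector of `J₁` for some `r`, with `λ² − (γ + r) λ + γ = 0`. For every eigenvalue `r` of
`J₁` this real quadratic has discriminant `(γ + r)² − 4γ ≤ 0`, so its roots are complex conjugates
of modulus `√γ`. With `t = 1 / (√2 κ)` one has `γ = (1 − t)²` and `1 − 1/(2κ²) = 2(1 − t) − (1 − t)²`,
so the bounds on `r` say `γ ≤ γ + r ≤ 2√γ`.
-/

open Matrix

theorem Matrix.mem_spectrum_iff_exists_mulVec_eq_smul {K n : Type*} [Field K] [Fintype n]
    [DecidableEq n] {A : Matrix n n K} {μ : K} :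
    μ ∈ spectrum K A ↔ ∃ v ≠ 0, A *ᵥ v = μ • v := by
  rw [← spectrum_toLin', ← Module.End.hasEigenvalue_iff_mem_spectrum]
  constructor
  · intro h
    obtain ⟨v, hv, hv0⟩ := h.exists_hasEigenvector
    exact ⟨v, hv0, by simpa using Module.End.mem_eigenspace_iff.1 hv⟩
  · rintro ⟨v, hv0, hv⟩
    exact Module.End.hasEigenvalue_of_hasEigenvector
      ⟨Module.End.mem_eigenspace_iff.2 (by simpa using hv), hv0⟩

theorem Matrix.IsHermitian.spectrum_map_ofReal_subset {n : Type*} [Fintype n] [DecidableEq n]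
    {A : Matrix n n ℝ} (hA : A.IsHermitian) :
    spectrum ℂ (A.map (algebraMap ℝ ℂ)) ⊆ (↑) '' spectrum ℝ A := by
  intro μ hμ
  rw [mem_spectrum_iff_isRoot_charpoly, charpoly_map, hA.charpoly_eq] at hμ
  simp only [Polynomial.IsRoot, Polynomial.eval_map, Polynomial.eval₂_finsetProd,
    Polynomial.eval₂_sub, Polynomial.eval₂_X, Polynomial.eval₂_C, Finset.prod_eq_zero_iff,
    Finset.mem_univ, true_and, sub_eq_zero] at hμ
  obtain ⟨i, rfl⟩ := hμ
  exact ⟨_, hA.eigenvalues_mem_spectrum_real i, rfl⟩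

def momentumMatrix {R n : Type*} [CommRing R] [DecidableEq n] (γ : R) (A : Matrix n n R) :
    Matrix (n ⊕ n) (n ⊕ n) R :=
  fromBlocks (γ • 1 + A) (-(γ • 1)) 1 0

theorem momentumMatrix_map {R S n : Type*} [CommRing R] [CommRing S] [DecidableEq n]
    (f : R →+* S) (γ : R) (A : Matrix n n R) :
    (momentumMatrix γ A).map f = momentumMatrix (f γ) (A.map f) := by
  simp [momentumMatrix, fromBlocks_map, Matrix.map_add, Matrix.map_smul' f γ 1 (map_mul f),
    Matrix.map_neg]

theorem exists_mem_spectrum_of_mem_spectrum_momentumMatrix {K n : Type*} [Field K] [Fintype n]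
    [DecidableEq n] {A : Matrix n n K} {γ l : K} (hγ : γ ≠ 0)
    (hl : l ∈ spectrum K (momentumMatrix γ A)) :
    ∃ r ∈ spectrum K A, l ^ 2 - (γ + r) * l + γ = 0 := by
  obtain ⟨v, hv0, hv⟩ := mem_spectrum_iff_exists_mulVec_eq_smul.1 hl
  rw [momentumMatrix, fromBlocks_mulVec] at hv
  set z := v ∘ Sum.inl
  set w := v ∘ Sum.inr
  have htop : γ • z + A *ᵥ z - γ • w = l • z := by
    funext i
    simpa [add_mulVec, smul_mulVec, neg_mulVec, sub_eq_add_neg, z, w] using congrFun hv (Sum.inl i)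
  have hbot : z = l • w := by
    funext i
    simpa [z, w] using congrFun hv (Sum.inr i)
  have hw : w ≠ 0 := by
    rintro hw
    refine hv0 (funext fun i => ?_)
    rcases i with i | i
    · exact congrFun (hbot.trans (by rw [hw, smul_zero])) i
    · exact congrFun hw i
  have hl0 : l ≠ 0 := by
    rintro rfl
    rw [zero_smul] at hbot
    rw [hbot, smul_zero, mulVec_zero, zero_add, zero_sub, smul_zero, neg_eq_zero,
      smul_eq_zero] at htop
    exact htop.elim hγ hw
  refine ⟨l - γ + γ / l, mem_spectrum_iff_exists_mulVec_eq_smul.2 ⟨w, hw, ?_⟩, by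
    field_simp; ring⟩
  apply smul_right_injective _ hl0
  have hr : l * (l - γ + γ / l) = l * (l - γ) + γ := by field_simp
  rw [hbot, mulVec_smul] at htop
  simp only [smul_smul, hr]
  linear_combination (norm := module) htop

theorem Complex.norm_eq_sqrt_of_sq_sub_mul_add_eq_zero {b c : ℝ} (hdisc : b ^ 2 ≤ 4 * c) {z : ℂ}
    (hz : z ^ 2 - b * z + c = 0) : ‖z‖ = √c := by
  have hre : z.re ^ 2 - z.im ^ 2 - b * z.re + c = 0 := by
    simpa [pow_two] using congrArg Complex.re hz
  have him : z.im * (2 * z.re - b) = 0 := by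
    have := congrArg Complex.im hz
    simp only [pow_two, Complex.sub_im, Complex.add_im, Complex.mul_im, Complex.ofReal_re,
      Complex.ofReal_im, Complex.zero_im] at this
    linear_combination this
  have hnormSq : z.re ^ 2 + z.im ^ 2 = c := by
    rcases mul_eq_zero.1 him with him0 | hre_eq
    · have hdouble : (2 * z.re - b) ^ 2 = 0 :=
        le_antisymm (by nlinarith) (sq_nonneg _)
      have := pow_eq_zero_iff two_ne_zero |>.1 hdouble
      rw [him0] at hre ⊢
      linear_combination -hre + z.re * this
    · linear_combination -hre + z.re * hre_eq
  rw [Complex.norm_def, Complex.normSq_apply, ← hnormSq]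
  ring_nf

theorem norm_eq_sqrt_of_mem_spectrum_momentumMatrix {n : Type*} [Fintype n] [DecidableEq n]
    {γ : ℝ} (hγ : 0 < γ) {A : Matrix n n ℝ} (hA : A.IsHermitian)
    (hdisc : ∀ r ∈ spectrum ℝ A, (γ + r) ^ 2 ≤ 4 * γ) {l : ℂ}
    (hl : l ∈ spectrum ℂ ((momentumMatrix γ A).map (algebraMap ℝ ℂ))) : ‖l‖ = √γ := by
  rw [momentumMatrix_map] at hl
  obtain ⟨μ, hμ, hquad⟩ :=
    exists_mem_spectrum_of_mem_spectrum_momentumMatrix (by simpa using hγ.ne') hl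
  obtain ⟨r, hr, rfl⟩ := hA.spectrum_map_ofReal_subset hμ
  exact Complex.norm_eq_sqrt_of_sq_sub_mul_add_eq_zero (hdisc r hr) (by simpa using hquad)

/-- If `J₁` is real symmetric with all eigenvalues in `[0, 1 − 1/(2κ²)]` for some `κ ≥ 2`,
and `γ = 1 + 1/(2κ²) − √2/κ`, then every eigenvalue `λ` of the momentum Jacobian
`J₂ = [[γI + J₁, −γI], [I, 0]]` satisfies `|λ| = √γ ≤ 1 − 1/(2√2·κ)`. -/
theorem momentum_jacobian_spectral_radius {n : ℕ} {κ : ℝ} (hκ : 2 ≤ κ)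
    (J₁ : Matrix (Fin n) (Fin n) ℝ) (hsymm : J₁ᵀ = J₁)
    (heig : ∀ μ ∈ spectrum ℝ J₁, 0 ≤ μ ∧ μ ≤ 1 - 1 / (2 * κ ^ 2)) :
    let γ : ℝ := 1 + 1 / (2 * κ ^ 2) - Real.sqrt 2 / κ
    let J₂ : Matrix (Fin n ⊕ Fin n) (Fin n ⊕ Fin n) ℝ :=
      fromBlocks (γ • 1 + J₁) (-(γ • 1)) 1 0
    ∀ l ∈ spectrum ℂ (J₂.map (algebraMap ℝ ℂ)),
      ‖l‖ = Real.sqrt γ ∧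
        Real.sqrt γ ≤ 1 - 1 / (2 * Real.sqrt 2 * κ) := by
  intro γ J₂ l hl
  set t := 1 / (Real.sqrt 2 * κ) with ht
  have hs2 : Real.sqrt 2 ^ 2 = 2 := Real.sq_sqrt (by norm_num)
  have hκ0 : 0 < κ := by linarith
  have hs1 : 1 < Real.sqrt 2 := by rw [Real.lt_sqrt] <;> norm_num
  have ht0 : 0 < t := by positivity
  have ht1 : t < 1 := by rw [ht, div_lt_one (by positivity)]; nlinarith
  have hγ : γ = (1 - t) ^ 2 := by
    simp only [γ, ht]; field_simp; linear_combination (1 - 2 * Real.sqrt 2 * κ) * hs2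
  have hrate : 1 - 1 / (2 * κ ^ 2) = 2 * (1 - t) - (1 - t) ^ 2 := by
    rw [ht]; field_simp; linear_combination -hs2
  have hsqrt : Real.sqrt γ = 1 - t := by rw [hγ, Real.sqrt_sq (by linarith)]
  have hdisc : ∀ r ∈ spectrum ℝ J₁, (γ + r) ^ 2 ≤ 4 * γ := fun r hr => by
    obtain ⟨hr0, hr1⟩ := heig r hr
    rw [hrate] at hr1
    rw [hγ]
    nlinarith
  refine ⟨norm_eq_sqrt_of_mem_spectrum_momentumMatrix (by rw [hγ]; positivity) hsymm hdisc hl, ?_⟩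
  have hhalf : 1 / (2 * Real.sqrt 2 * κ) = t / 2 := by rw [ht]; field_simp
  rw [hsqrt, hhalf]
  linarith
end
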